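/- With F(z) = Σ_{n odd} σ_1(n)·q^n and q = e^{2πi(x+iy)}, one has |F(x+iy)| ≤ 1.0001·e^{−2πy} for all real x and all y ≥ √3/2. -/

import Mathlib

open Real Complex

/-!
Writing `r = e^{-2πy}`, the `n`-th term has norm `σ₁(n) rⁿ`, and `σ₁(n) ≤ n² < 4ⁿ`. The terms
`n ≤ 4` contribute `r + 4r³` (only `n = 1, 3` are odd), and the rest is dominated by the geometric
tail `(4r)⁵ / (1 - 4r)`. For `y ≥ √3/2` we have `r ≤ e^{-π√3} < 1/210`, which makes both
corrections smaller than `10⁻⁴ r`.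
-/

open ArithmeticFunction Finset
open scoped ArithmeticFunction.sigma

theorem ArithmeticFunction.sigma_one_le_four_pow (n : ℕ) : σ 1 n ≤ 4 ^ n :=
  calc σ 1 n ≤ n ^ 2 := sigma_le_pow_succ 1 n
    _ ≤ (2 ^ n) ^ 2 := Nat.pow_le_pow_left n.lt_two_pow_self.le 2
    _ = 4 ^ n := by rw [← pow_mul, mul_comm, pow_mul]; norm_num

theorem norm_tsum_le_sum_range_add_geometric {E : Type*} [SeminormedAddCommGroup E]
    {f : ℕ → E} {ρ : ℝ} (hρ₀ : 0 ≤ ρ) (hρ₁ : ρ < 1) (hf : ∀ n, ‖f n‖ ≤ ρ ^ n) (k : ℕ) :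
    ‖∑' n, f n‖ ≤ ∑ i ∈ range k, ‖f i‖ + ρ ^ k / (1 - ρ) := by
  have hgeom := summable_geometric_of_lt_one hρ₀ hρ₁
  have hsum : Summable fun n ↦ ‖f n‖ := hgeom.of_nonneg_of_le (fun _ ↦ norm_nonneg _) hf
  have htail : ∑' n, ‖f (n + k)‖ ≤ ∑' n, ρ ^ k * ρ ^ n := by
    refine Summable.tsum_le_tsum (fun n ↦ ?_) ((summable_nat_add_iff k).mpr hsum) (hgeom.mul_left _)
    rw [← pow_add, add_comm]
    exact hf _
  calc ‖∑' n, f n‖ ≤ ∑' n, ‖f n‖ := norm_tsum_le_tsum_norm hsum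
    _ = ∑ i ∈ range k, ‖f i‖ + ∑' n, ‖f (n + k)‖ := (hsum.sum_add_tsum_nat_add k).symm
    _ ≤ ∑ i ∈ range k, ‖f i‖ + ρ ^ k / (1 - ρ) := by
      rw [tsum_mul_left, tsum_geometric_of_lt_one hρ₀ hρ₁, ← div_eq_mul_inv] at htail
      gcongr

theorem norm_cexp_two_pi_I_nat_mul (n : ℕ) (x y : ℝ) :
    ‖cexp (2 * π * I * n * (x + y * I))‖ = rexp (-2 * π * y) ^ n := by
  rw [Complex.norm_exp, ← Real.exp_nat_mul]
  congr 1
  simp only [mul_re, mul_im, add_re, add_im, ofReal_re, ofReal_im, I_re, I_im, natCast_re,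
    natCast_im, re_ofNat, im_ofNat]
  ring

theorem exp_neg_two_pi_mul_le {y : ℝ} (hy : √3 / 2 ≤ y) : rexp (-2 * π * y) ≤ 1 / 210 := by
  have hsqrt3 : (1.732 : ℝ) ≤ √3 := Real.le_sqrt_of_sq_le (by norm_num)
  have hy' : 5.44 ≤ 2 * π * y := by nlinarith [Real.pi_gt_d4, Real.sqrt_nonneg 3]
  have h210 : 210 ≤ rexp 5.44 :=
    calc (210 : ℝ) ≤ 2.7182818283 ^ 5 * (0.44 + 1) := by norm_num
      _ ≤ rexp 1 ^ 5 * rexp 0.44 := by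
        gcongr
        exacts [Real.exp_one_gt_d9.le, Real.add_one_le_exp _]
      _ = rexp 5.44 := by rw [← Real.exp_nat_mul, ← Real.exp_add]; norm_num
  rw [show -2 * π * y = -(2 * π * y) by ring, Real.exp_neg, one_div]
  exact inv_anti₀ (by norm_num) (h210.trans (Real.exp_le_exp.mpr hy'))

theorem add_four_mul_pow_three_add_geometric_tail_le {r : ℝ} (hr₀ : 0 ≤ r) (hr : r ≤ 1 / 210) :
    r + 4 * r ^ 3 + (4 * r) ^ 5 / (1 - 4 * r) ≤ 1.0001 * r := by
  have htail : (4 * r) ^ 5 / (1 - 4 * r) ≤ 2 * (4 * r) ^ 5 := by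
    rw [div_le_iff₀ (by linarith)]
    nlinarith [pow_nonneg (mul_nonneg zero_le_four hr₀) 5]
  have hr4 : r ^ 4 ≤ (1 / 210) ^ 4 := by gcongr
  nlinarith [pow_nonneg hr₀ 2]

theorem stmt_18 (x y : ℝ) (hy : Real.sqrt 3 / 2 ≤ y) :
    ‖∑' n : ℕ, if Odd n then
        ((∑ d ∈ n.divisors, d : ℕ) : ℂ) *
          Complex.exp (2 * Real.pi * Complex.I * (n : ℂ) * (x + y * Complex.I))
      else 0‖
      ≤ 1.0001 * Real.exp (-2 * Real.pi * y) := by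
  set r := rexp (-2 * π * y)
  have hr₀ : 0 ≤ r := (Real.exp_pos _).le
  have hr : r ≤ 1 / 210 := exp_neg_two_pi_mul_le hy
  set f : ℕ → ℂ := fun n ↦ if Odd n then
    ((∑ d ∈ n.divisors, d : ℕ) : ℂ) * cexp (2 * π * I * (n : ℂ) * (x + y * I)) else 0
  have hnorm : ∀ n, ‖f n‖ = if Odd n then (σ 1 n : ℝ) * r ^ n else 0 := fun n ↦ by
    split_ifs with hn
    · simp only [f, if_pos hn, norm_mul, Complex.norm_natCast, norm_cexp_two_pi_I_nat_mul,
        sigma_one_apply, r]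
    · simp [f, hn]
  have hf : ∀ n, ‖f n‖ ≤ (4 * r) ^ n := fun n ↦ by
    rw [hnorm, mul_pow]
    split_ifs
    · gcongr; exact_mod_cast sigma_one_le_four_pow n
    · positivity
  calc ‖∑' n, f n‖ ≤ ∑ i ∈ range 5, ‖f i‖ + (4 * r) ^ 5 / (1 - 4 * r) :=
        norm_tsum_le_sum_range_add_geometric (by positivity) (by linarith) hf 5
    _ = r + 4 * r ^ 3 + (4 * r) ^ 5 / (1 - 4 * r) := by
      have hσ₁ : σ 1 1 = 1 := by decide
      have hσ₃ : σ 1 3 = 4 := by decide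
      simp [sum_range_succ, hnorm, hσ₁, hσ₃, Nat.odd_iff]
    _ ≤ 1.0001 * r := add_four_mul_pow_three_add_geometric_tail_le hr₀ hr
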